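/- In any 3SS scheme for domain S, for every distribution P_X supported on S: H(W₃₁ | W₁₂) ≥ H(X₁, X₃ | X₂) + RI(X₁; X₂). -/

import Mathlib

open scoped Classical

/-- A probability distribution on a finite sample space `Ω`. -/
structure FinProb (Ω : Type) [Fintype Ω] where
  p : Ω → ℝ
  nonneg : ∀ ω, 0 ≤ p ω
  sum_one : ∑ ω, p ω = 1

variable {Ω : Type} [Fintype Ω]

/-- `P(A = a)` for a random variable `A` on `(Ω, μ)`. -/
noncomputable def prEq {α : Type} (μ : FinProb Ω) (A : Ω → α) (a : α) : ℝ :=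
  ∑ ω, if A ω = a then μ.p ω else 0

/-- Shannon entropy (natural log) of a finite random variable. -/
noncomputable def ent {α : Type} [Fintype α] (μ : FinProb Ω) (A : Ω → α) : ℝ :=
  ∑ a, Real.negMulLog (prEq μ A a)

/-- Conditional entropy `H(A | B)`. -/
noncomputable def condEnt {α β : Type} [Fintype α] [Fintype β]
    (μ : FinProb Ω) (A : Ω → α) (B : Ω → β) : ℝ :=
  ent μ (fun ω => (A ω, B ω)) - ent μ B

/-- Mutual information `I(A ; B)`. -/
noncomputable def mutInf {α β : Type} [Fintype α] [Fintype β]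
    (μ : FinProb Ω) (A : Ω → α) (B : Ω → β) : ℝ :=
  ent μ A + ent μ B - ent μ (fun ω => (A ω, B ω))

/-- Conditional mutual information `I(A ; B | C)`. -/
noncomputable def condMutInf {α β γ : Type} [Fintype α] [Fintype β] [Fintype γ]
    (μ : FinProb Ω) (A : Ω → α) (B : Ω → β) (Cc : Ω → γ) : ℝ :=
  ent μ (fun ω => (A ω, Cc ω)) + ent μ (fun ω => (B ω, Cc ω))
    - ent μ (fun ω => (A ω, B ω, Cc ω)) - ent μ Cc

/-- Gács–Körner common information `CI_GK(A ; B)`: the supremum of `H(Q)` over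
random variables `Q` that are almost surely a deterministic function of `A`
and almost surely a deterministic function of `B`. -/
noncomputable def gkInf {α β : Type} [Fintype α] [Fintype β]
    (μ : FinProb Ω) (A : Ω → α) (B : Ω → β) : ℝ :=
  sSup { h : ℝ | ∃ (n : ℕ) (f : α → Fin n) (g : β → Fin n),
    (∀ ω, 0 < μ.p ω → f (A ω) = g (B ω)) ∧ h = ent μ (fun ω => f (A ω)) }

/-- Residual information `RI(A ; B) = I(A ; B) − CI_GK(A ; B)`. -/
noncomputable def resInf {α β : Type} [Fintype α] [Fintype β]
    (μ : FinProb Ω) (A : Ω → α) (B : Ω → β) : ℝ :=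
  mutInf μ A B - gkInf μ A B

section Basic

variable {α β γ : Type} (μ : FinProb Ω)

lemma prEq_nonneg (A : Ω → α) (a : α) : 0 ≤ prEq μ A a := by
  apply Finset.sum_nonneg; intro ω _; split <;> simp [μ.nonneg ω]

lemma p_le_prEq (A : Ω → α) (ω : Ω) : μ.p ω ≤ prEq μ A (A ω) := by
  classical
  have := Finset.single_le_sum (f := fun ω' => if A ω' = A ω then μ.p ω' else 0)
    (fun ω' _ => by split <;> simp [μ.nonneg ω']) (Finset.mem_univ ω)
  simpa [prEq] using this

lemma prEq_pos (A : Ω → α) {ω : Ω} (h : μ.p ω ≠ 0) : 0 < prEq μ A (A ω) :=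
  lt_of_lt_of_le (lt_of_le_of_ne (μ.nonneg ω) (Ne.symm h)) (p_le_prEq μ A ω)

lemma sum_prEq (A : Ω → α) [Fintype α] : ∑ a, prEq μ A a = 1 := by
  rw [← μ.sum_one]
  unfold prEq
  rw [Finset.sum_comm]
  exact Finset.sum_congr rfl fun ω _ => by simp

lemma prEq_congr {A : Ω → α} {B : Ω → β} {a : α} {b : β}
    (h : ∀ ω, μ.p ω ≠ 0 → (A ω = a ↔ B ω = b)) : prEq μ A a = prEq μ B b := by
  unfold prEq
  apply Finset.sum_congr rfl
  intro ω _
  by_cases hp : μ.p ω = 0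
  · split <;> split <;> simp [hp]
  · rw [show (A ω = a) = (B ω = b) from propext (h ω hp)]

lemma exists_of_prEq_ne_zero {A : Ω → α} {a : α} (h : prEq μ A a ≠ 0) :
    ∃ ω, μ.p ω ≠ 0 ∧ A ω = a := by
  obtain ⟨ω, -, hω⟩ := Finset.exists_ne_zero_of_sum_ne_zero h
  refine ⟨ω, ?_, ?_⟩ <;> by_cases hA : A ω = a <;> simp_all

lemma sum_prEq_mul (A : Ω → α) [Fintype α] (f : α → ℝ) :
    ∑ a, prEq μ A a * f a = ∑ ω, μ.p ω * f (A ω) := by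
  have : ∀ a, prEq μ A a * f a = ∑ ω, (if A ω = a then μ.p ω * f a else 0) := by
    intro a
    unfold prEq
    rw [Finset.sum_mul]
    exact Finset.sum_congr rfl fun ω _ => by split <;> simp
  simp_rw [this]
  rw [Finset.sum_comm]
  exact Finset.sum_congr rfl fun ω _ => by simp

lemma entE (A : Ω → α) [Fintype α] :
    ent μ A = ∑ ω, μ.p ω * (-Real.log (prEq μ A (A ω))) := by
  rw [← sum_prEq_mul μ A (fun a => -Real.log (prEq μ A a))]
  unfold ent
  apply Finset.sum_congr rfl
  intro a _
  rw [Real.negMulLog]; ring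

lemma prEq_marg_fst (X : Ω → α) (Y : Ω → β) [Fintype α] (y : β) :
    ∑ x, prEq μ (fun ω => (X ω, Y ω)) (x, y) = prEq μ Y y := by
  unfold prEq
  rw [Finset.sum_comm]
  apply Finset.sum_congr rfl
  intro ω _
  by_cases hY : Y ω = y <;> simp [Prod.ext_iff, hY]

lemma prEq_marg_snd (X : Ω → α) (Y : Ω → β) [Fintype β] (x : α) :
    ∑ y, prEq μ (fun ω => (X ω, Y ω)) (x, y) = prEq μ X x := by
  unfold prEq
  rw [Finset.sum_comm]
  apply Finset.sum_congr rfl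
  intro ω _
  by_cases hX : X ω = x <;> simp [Prod.ext_iff, hX]

lemma prEq_pair_le_snd (X : Ω → α) (Y : Ω → β) (x : α) (y : β) :
    prEq μ (fun ω => (X ω, Y ω)) (x, y) ≤ prEq μ Y y := by
  apply Finset.sum_le_sum
  intro ω _
  by_cases hY : Y ω = y <;> by_cases hX : X ω = x <;> simp [Prod.ext_iff, hX, hY, μ.nonneg ω, le_refl]

lemma prEq_pair_le_fst (X : Ω → α) (Y : Ω → β) (x : α) (y : β) :
    prEq μ (fun ω => (X ω, Y ω)) (x, y) ≤ prEq μ X x := by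
  apply Finset.sum_le_sum
  intro ω _
  by_cases hY : Y ω = y <;> by_cases hX : X ω = x <;> simp [Prod.ext_iff, hX, hY, μ.nonneg ω, le_refl]

end Basic

section Part2

variable {α β γ : Type} (μ : FinProb Ω)

lemma ent_congr [Fintype α] {A B : Ω → α} (h : ∀ ω, μ.p ω ≠ 0 → A ω = B ω) :
    ent μ A = ent μ B := by
  unfold ent
  refine Finset.sum_congr rfl fun a _ => ?_
  rw [prEq_congr μ (fun ω hp => by rw [h ω hp])]

lemma ent_comp_inj [Fintype α] [Fintype β] (A : Ω → α) (f : α → β)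
    (hf : Function.Injective f) : ent μ (fun ω => f (A ω)) = ent μ A := by
  unfold ent
  rw [← Finset.sum_subset (Finset.subset_univ (Finset.univ.image f))]
  · rw [Finset.sum_image (fun a _ b _ h => hf h)]
    refine Finset.sum_congr rfl fun a _ => ?_
    congr 1
    exact prEq_congr μ (fun ω _ => ⟨fun h' => hf h', fun h' => by rw [h']⟩)
  · intro b _ hb
    have : prEq μ (fun ω => f (A ω)) b = 0 := by
      by_contra h
      obtain ⟨ω, -, hω⟩ := exists_of_prEq_ne_zero μ h
      exact hb (Finset.mem_image.2 ⟨A ω, Finset.mem_univ _, hω⟩)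
    simp [this, Real.negMulLog_zero]

lemma ent_eq_of_mutual [Fintype α] [Fintype β] (A : Ω → α) (B : Ω → β)
    (f : α → β) (g : β → α)
    (hfn : ∀ ω, μ.p ω ≠ 0 → B ω = f (A ω)) (hgn : ∀ ω, μ.p ω ≠ 0 → A ω = g (B ω)) :
    ent μ A = ent μ B := by
  have h1 : ent μ (fun ω => (A ω, B ω)) = ent μ A := by
    rw [ent_congr μ (A := fun ω => (A ω, B ω)) (B := fun ω => (A ω, f (A ω)))
      (fun ω hp => by rw [hfn ω hp])]
    exact ent_comp_inj μ A (fun a => (a, f a)) (fun a b h => congrArg Prod.fst h)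
  have h2 : ent μ (fun ω => (A ω, B ω)) = ent μ B := by
    rw [ent_congr μ (A := fun ω => (A ω, B ω)) (B := fun ω => (g (B ω), B ω))
      (fun ω hp => by rw [← hgn ω hp])]
    exact ent_comp_inj μ B (fun b => (g b, b)) (fun a b h => congrArg Prod.snd h)
  rw [← h1, h2]

lemma pair_ge [Fintype α] [Fintype β] (X : Ω → α) (Y : Ω → β) :
    ent μ Y ≤ ent μ (fun ω => (X ω, Y ω)) := by
  rw [entE, entE]
  apply Finset.sum_le_sum
  intro ω _
  by_cases hp : μ.p ω = 0
  · simp [hp]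
  · have h1 : 0 < prEq μ (fun ω => (X ω, Y ω)) (X ω, Y ω) := prEq_pos μ _ hp
    have h2 : prEq μ (fun ω => (X ω, Y ω)) (X ω, Y ω) ≤ prEq μ Y (Y ω) :=
      prEq_pair_le_snd μ X Y _ _
    have := Real.log_le_log h1 h2
    have hpp : 0 ≤ μ.p ω := μ.nonneg ω
    nlinarith

lemma ent_comp_le [Fintype α] [Fintype β] (A : Ω → α) (f : α → β) :
    ent μ (fun ω => f (A ω)) ≤ ent μ A := by
  calc ent μ (fun ω => f (A ω)) ≤ ent μ (fun ω => (A ω, f (A ω))) := pair_ge μ A _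
  _ = ent μ A := ent_comp_inj μ A (fun a => (a, f a)) (fun a b h => congrArg Prod.fst h)

end Part2

section Part3

variable {α β γ : Type} [Fintype α] [Fintype β] [Fintype γ]
variable (μ : FinProb Ω) (A : Ω → α) (B : Ω → β) (Cc : Ω → γ)

lemma cmi_repr :
    condMutInf μ A B Cc = ∑ ω, μ.p ω *
      (Real.log (prEq μ (fun ω' => (A ω', B ω', Cc ω')) (A ω, B ω, Cc ω))
        + Real.log (prEq μ Cc (Cc ω))
        - Real.log (prEq μ (fun ω' => (A ω', Cc ω')) (A ω, Cc ω))
        - Real.log (prEq μ (fun ω' => (B ω', Cc ω')) (B ω, Cc ω))) := by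
  unfold condMutInf
  rw [entE, entE, entE, entE]
  rw [← Finset.sum_add_distrib, ← Finset.sum_sub_distrib, ← Finset.sum_sub_distrib]
  exact Finset.sum_congr rfl fun ω _ => by ring

/-- the "ratio" at a sample point -/
noncomputable def rat (ω : Ω) : ℝ :=
  prEq μ (fun ω' => (A ω', Cc ω')) (A ω, Cc ω) * prEq μ (fun ω' => (B ω', Cc ω')) (B ω, Cc ω)
    / (prEq μ (fun ω' => (A ω', B ω', Cc ω')) (A ω, B ω, Cc ω) * prEq μ Cc (Cc ω))

lemma sum_rat_le_one : ∑ ω, μ.p ω * rat μ A B Cc ω ≤ 1 := by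
  have h1 : ∑ ω, μ.p ω * rat μ A B Cc ω
      = ∑ t : α × β × γ, prEq μ (fun ω' => (A ω', B ω', Cc ω')) t *
          (prEq μ (fun ω' => (A ω', Cc ω')) (t.1, t.2.2) *
            prEq μ (fun ω' => (B ω', Cc ω')) (t.2.1, t.2.2)
           / (prEq μ (fun ω' => (A ω', B ω', Cc ω')) t * prEq μ Cc t.2.2)) := by
    rw [sum_prEq_mul μ (fun ω => (A ω, B ω, Cc ω))
      (fun t => prEq μ (fun ω' => (A ω', Cc ω')) (t.1, t.2.2) *
            prEq μ (fun ω' => (B ω', Cc ω')) (t.2.1, t.2.2)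
           / (prEq μ (fun ω' => (A ω', B ω', Cc ω')) t * prEq μ Cc t.2.2))]
    rfl
  rw [h1]
  have h2 : ∀ t : α × β × γ, prEq μ (fun ω' => (A ω', B ω', Cc ω')) t *
          (prEq μ (fun ω' => (A ω', Cc ω')) (t.1, t.2.2) *
            prEq μ (fun ω' => (B ω', Cc ω')) (t.2.1, t.2.2)
           / (prEq μ (fun ω' => (A ω', B ω', Cc ω')) t * prEq μ Cc t.2.2))
        ≤ prEq μ (fun ω' => (A ω', Cc ω')) (t.1, t.2.2) *
            prEq μ (fun ω' => (B ω', Cc ω')) (t.2.1, t.2.2) / prEq μ Cc t.2.2 := by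
    intro t
    by_cases h : prEq μ (fun ω' => (A ω', B ω', Cc ω')) t = 0
    · rw [h, zero_mul]
      exact div_nonneg (mul_nonneg (prEq_nonneg μ _ _) (prEq_nonneg μ _ _)) (prEq_nonneg μ _ _)
    · by_cases hd : prEq μ Cc t.2.2 = 0
      · simp [hd]
      · apply le_of_eq
        field_simp
  refine le_trans (Finset.sum_le_sum fun t _ => h2 t) ?_
  have h3 : ∀ (F : α → β → γ → ℝ), ∑ t : α × β × γ, F t.1 t.2.1 t.2.2
      = ∑ c, ∑ a, ∑ b, F a b c := by
    intro F
    rw [Fintype.sum_prod_type]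
    calc ∑ a, ∑ t : β × γ, F a t.1 t.2 = ∑ a, ∑ c, ∑ b, F a b c := by
          refine Finset.sum_congr rfl fun a _ => ?_
          rw [Fintype.sum_prod_type]
          exact Finset.sum_comm
      _ = ∑ c, ∑ a, ∑ b, F a b c := Finset.sum_comm
  rw [h3 (fun a b c => prEq μ (fun ω' => (A ω', Cc ω')) (a, c) *
        prEq μ (fun ω' => (B ω', Cc ω')) (b, c) / prEq μ Cc c)]
  have h4 : ∀ c, ∑ a, ∑ b, prEq μ (fun ω' => (A ω', Cc ω')) (a, c) *
        prEq μ (fun ω' => (B ω', Cc ω')) (b, c) / prEq μ Cc c ≤ prEq μ Cc c := by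
    intro c
    have e1 : ∑ a, ∑ b, prEq μ (fun ω' => (A ω', Cc ω')) (a, c) *
        prEq μ (fun ω' => (B ω', Cc ω')) (b, c) / prEq μ Cc c
        = (∑ a, prEq μ (fun ω' => (A ω', Cc ω')) (a, c)) *
          (∑ b, prEq μ (fun ω' => (B ω', Cc ω')) (b, c)) * (prEq μ Cc c)⁻¹ := by
      simp_rw [div_eq_mul_inv, ← Finset.sum_mul, ← Finset.mul_sum]
      rw [← Finset.sum_mul]
    rw [e1, prEq_marg_fst μ A Cc c, prEq_marg_fst μ B Cc c]
    by_cases h : prEq μ Cc c = 0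
    · simp [h]
    · rw [mul_assoc, mul_inv_cancel₀ h, mul_one]
  calc ∑ c, ∑ a, ∑ b, prEq μ (fun ω' => (A ω', Cc ω')) (a, c) *
        prEq μ (fun ω' => (B ω', Cc ω')) (b, c) / prEq μ Cc c
      ≤ ∑ c, prEq μ Cc c := Finset.sum_le_sum fun c _ => h4 c
    _ = 1 := sum_prEq μ Cc

lemma rat_pos {ω : Ω} (hp : μ.p ω ≠ 0) : 0 < rat μ A B Cc ω := by
  unfold rat
  have h1 := prEq_pos μ (fun ω' => (A ω', Cc ω')) hp
  have h2 := prEq_pos μ (fun ω' => (B ω', Cc ω')) hp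
  have h3 := prEq_pos μ (fun ω' => (A ω', B ω', Cc ω')) hp
  have h4 := prEq_pos μ Cc hp
  positivity

lemma log_rat {ω : Ω} (hp : μ.p ω ≠ 0) :
    Real.log (rat μ A B Cc ω)
      = Real.log (prEq μ (fun ω' => (A ω', Cc ω')) (A ω, Cc ω))
        + Real.log (prEq μ (fun ω' => (B ω', Cc ω')) (B ω, Cc ω))
        - Real.log (prEq μ (fun ω' => (A ω', B ω', Cc ω')) (A ω, B ω, Cc ω))
        - Real.log (prEq μ Cc (Cc ω)) := by
  have h1 := prEq_pos μ (fun ω' => (A ω', Cc ω')) hp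
  have h2 := prEq_pos μ (fun ω' => (B ω', Cc ω')) hp
  have h3 := prEq_pos μ (fun ω' => (A ω', B ω', Cc ω')) hp
  have h4 := prEq_pos μ Cc hp
  unfold rat
  rw [Real.log_div (by positivity) (by positivity), Real.log_mul (ne_of_gt h1) (ne_of_gt h2),
    Real.log_mul (ne_of_gt h3) (ne_of_gt h4)]
  ring

lemma sum_one_sub_rat :
    ∑ ω, μ.p ω * (1 - rat μ A B Cc ω) = 1 - ∑ ω, μ.p ω * rat μ A B Cc ω := by
  simp_rw [mul_sub, mul_one]
  rw [Finset.sum_sub_distrib, μ.sum_one]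

lemma cmi_sub_sum :
    condMutInf μ A B Cc - ∑ ω, μ.p ω * (1 - rat μ A B Cc ω)
      = ∑ ω, μ.p ω * (-Real.log (rat μ A B Cc ω) - (1 - rat μ A B Cc ω)) := by
  rw [cmi_repr, ← Finset.sum_sub_distrib]
  refine Finset.sum_congr rfl fun ω _ => ?_
  by_cases hp : μ.p ω = 0
  · simp [hp]
  · rw [log_rat μ A B Cc hp]
    ring

lemma cmi_term_nonneg {ω : Ω} :
    0 ≤ μ.p ω * (-Real.log (rat μ A B Cc ω) - (1 - rat μ A B Cc ω)) := by
  by_cases hp : μ.p ω = 0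
  · simp [hp]
  · have hr := rat_pos μ A B Cc hp
    have := Real.log_le_sub_one_of_pos hr
    have hpp : 0 ≤ μ.p ω := μ.nonneg ω
    nlinarith

lemma cmi_nonneg : 0 ≤ condMutInf μ A B Cc := by
  have h1 := cmi_sub_sum μ A B Cc
  have h2 : 0 ≤ ∑ ω, μ.p ω * (-Real.log (rat μ A B Cc ω) - (1 - rat μ A B Cc ω)) :=
    Finset.sum_nonneg fun ω _ => cmi_term_nonneg μ A B Cc
  have h3 := sum_one_sub_rat μ A B Cc
  have h4 := sum_rat_le_one μ A B Cc
  linarith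

lemma cmi_eq_zero_rat_eq_one (h : condMutInf μ A B Cc = 0) :
    ∀ ω, μ.p ω ≠ 0 → rat μ A B Cc ω = 1 := by
  have h1 := cmi_sub_sum μ A B Cc
  have h3 := sum_one_sub_rat μ A B Cc
  have h4 := sum_rat_le_one μ A B Cc
  have h5 : ∑ ω, μ.p ω * (-Real.log (rat μ A B Cc ω) - (1 - rat μ A B Cc ω)) = 0 := by
    have h2 : 0 ≤ ∑ ω, μ.p ω * (-Real.log (rat μ A B Cc ω) - (1 - rat μ A B Cc ω)) :=
      Finset.sum_nonneg fun ω _ => cmi_term_nonneg μ A B Cc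
    linarith
  have h6 := (Finset.sum_eq_zero_iff_of_nonneg
    (fun ω _ => cmi_term_nonneg μ A B Cc (ω := ω))).1 h5
  intro ω hp
  have h7 := h6 ω (Finset.mem_univ ω)
  have hr := rat_pos μ A B Cc hp
  by_contra hne
  have := Real.log_lt_sub_one_of_pos hr hne
  have hpp : 0 < μ.p ω := lt_of_le_of_ne (μ.nonneg ω) (Ne.symm hp)
  nlinarith

lemma cmi_eq_zero_pointwise (h : condMutInf μ A B Cc = 0) :
    ∀ ω, μ.p ω ≠ 0 →
      prEq μ (fun ω' => (A ω', Cc ω')) (A ω, Cc ω) *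
        prEq μ (fun ω' => (B ω', Cc ω')) (B ω, Cc ω)
      = prEq μ (fun ω' => (A ω', B ω', Cc ω')) (A ω, B ω, Cc ω) * prEq μ Cc (Cc ω) := by
  intro ω hp
  have h1 := cmi_eq_zero_rat_eq_one μ A B Cc h ω hp
  have h3 := prEq_pos μ (fun ω' => (A ω', B ω', Cc ω')) hp
  have h4 := prEq_pos μ Cc hp
  unfold rat at h1
  field_simp at h1
  linarith [h1]

lemma cmi_eq_zero_of_pointwise
    (h : ∀ ω, μ.p ω ≠ 0 →
      prEq μ (fun ω' => (A ω', Cc ω')) (A ω, Cc ω) *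
        prEq μ (fun ω' => (B ω', Cc ω')) (B ω, Cc ω)
      = prEq μ (fun ω' => (A ω', B ω', Cc ω')) (A ω, B ω, Cc ω) * prEq μ Cc (Cc ω)) :
    condMutInf μ A B Cc = 0 := by
  rw [cmi_repr]
  refine Finset.sum_eq_zero fun ω _ => ?_
  by_cases hp : μ.p ω = 0
  · simp [hp]
  · have h1 := prEq_pos μ (fun ω' => (A ω', Cc ω')) hp
    have h2 := prEq_pos μ (fun ω' => (B ω', Cc ω')) hp
    have h3 := prEq_pos μ (fun ω' => (A ω', B ω', Cc ω')) hp
    have h4 := prEq_pos μ Cc hp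
    have h5 : Real.log (prEq μ (fun ω' => (A ω', Cc ω')) (A ω, Cc ω))
        + Real.log (prEq μ (fun ω' => (B ω', Cc ω')) (B ω, Cc ω))
        = Real.log (prEq μ (fun ω' => (A ω', B ω', Cc ω')) (A ω, B ω, Cc ω))
          + Real.log (prEq μ Cc (Cc ω)) := by
      rw [← Real.log_mul (ne_of_gt h1) (ne_of_gt h2), ← Real.log_mul (ne_of_gt h3) (ne_of_gt h4),
        h ω hp]
    rw [show (Real.log (prEq μ (fun ω' => (A ω', B ω', Cc ω')) (A ω, B ω, Cc ω))
        + Real.log (prEq μ Cc (Cc ω))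
        - Real.log (prEq μ (fun ω' => (A ω', Cc ω')) (A ω, Cc ω))
        - Real.log (prEq μ (fun ω' => (B ω', Cc ω')) (B ω, Cc ω))) = 0 from by linarith]
    ring

end Part3

section Part4

variable {α β : Type} [Fintype α] [Fintype β] (μ : FinProb Ω)

lemma condEnt_zero_prEq {X : Ω → α} {Y : Ω → β} (h : condEnt μ X Y = 0) :
    ∀ ω, μ.p ω ≠ 0 → prEq μ (fun ω' => (X ω', Y ω')) (X ω, Y ω) = prEq μ Y (Y ω) := by
  have hrepr : condEnt μ X Y = ∑ ω, μ.p ω *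
      (Real.log (prEq μ Y (Y ω)) - Real.log (prEq μ (fun ω' => (X ω', Y ω')) (X ω, Y ω))) := by
    unfold condEnt
    rw [entE, entE, ← Finset.sum_sub_distrib]
    exact Finset.sum_congr rfl fun ω _ => by ring
  have hterm : ∀ ω : Ω, 0 ≤ μ.p ω *
      (Real.log (prEq μ Y (Y ω)) - Real.log (prEq μ (fun ω' => (X ω', Y ω')) (X ω, Y ω))) := by
    intro ω
    by_cases hp : μ.p ω = 0
    · simp [hp]
    · have h1 := prEq_pos μ (fun ω' => (X ω', Y ω')) hp
      have h2 := Real.log_le_log h1 (prEq_pair_le_snd μ X Y (X ω) (Y ω))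
      have := μ.nonneg ω
      nlinarith
  have hz : ∀ ω ∈ Finset.univ, μ.p ω *
      (Real.log (prEq μ Y (Y ω)) - Real.log (prEq μ (fun ω' => (X ω', Y ω')) (X ω, Y ω))) = 0 := by
    rw [← Finset.sum_eq_zero_iff_of_nonneg (fun ω _ => hterm ω)]
    rw [← hrepr, h]
  intro ω hp
  have h1 := prEq_pos μ (fun ω' => (X ω', Y ω')) hp
  have h2 := prEq_pos μ Y hp
  have h3 := hz ω (Finset.mem_univ ω)
  have h4 : Real.log (prEq μ Y (Y ω))
      = Real.log (prEq μ (fun ω' => (X ω', Y ω')) (X ω, Y ω)) := by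
    rcases mul_eq_zero.1 h3 with h' | h'
    · exact absurd h' hp
    · linarith
  have := congrArg Real.exp h4
  rwa [Real.exp_log h2, Real.exp_log h1, eq_comm] at this

lemma exists_pos_p : ∃ ω, μ.p ω ≠ 0 := by
  by_contra h
  push_neg at h
  have : (1:ℝ) = 0 := by rw [← μ.sum_one]; exact Finset.sum_eq_zero fun ω _ => h ω
  norm_num at this

lemma condEnt_zero_fn {X : Ω → α} {Y : Ω → β} (h : condEnt μ X Y = 0) :
    ∃ f : β → α, ∀ ω, μ.p ω ≠ 0 → X ω = f (Y ω) := by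
  have key := condEnt_zero_prEq μ h
  have hne := exists_pos_p μ
  refine ⟨fun y => if h' : ∃ ω, μ.p ω ≠ 0 ∧ Y ω = y then X h'.choose else X hne.choose, ?_⟩
  intro ω hp
  have h' : ∃ ω', μ.p ω' ≠ 0 ∧ Y ω' = Y ω := ⟨ω, hp, rfl⟩
  show X ω = if h'' : ∃ ω', μ.p ω' ≠ 0 ∧ Y ω' = Y ω then X h''.choose else X hne.choose
  rw [dif_pos h']
  obtain ⟨hp', hY'⟩ := h'.choose_spec
  set ω' := h'.choose
  by_contra hne'
  have k1 : prEq μ (fun ω'' => (X ω'', Y ω'')) (X ω, Y ω) = prEq μ Y (Y ω) := key ω hp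
  have k2 : prEq μ (fun ω'' => (X ω'', Y ω'')) (X ω', Y ω) = prEq μ Y (Y ω) := by
    rw [← hY']; exact key ω' hp'
  have hpos : 0 < prEq μ Y (Y ω) := by rw [← hY']; exact prEq_pos μ Y hp'
  have hsub : ∑ x ∈ ({X ω, X ω'} : Finset α), prEq μ (fun ω'' => (X ω'', Y ω'')) (x, Y ω)
      ≤ ∑ x, prEq μ (fun ω'' => (X ω'', Y ω'')) (x, Y ω) :=
    Finset.sum_le_sum_of_subset_of_nonneg (Finset.subset_univ _)
      (fun x _ _ => prEq_nonneg μ _ _)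
  rw [Finset.sum_pair hne', prEq_marg_fst μ X Y (Y ω), k1, k2] at hsub
  linarith

end Part4

section Part5

variable {α β κ W' : Type} [Fintype α] [Fintype β] (μ : FinProb Ω)

lemma prEq_comp_group [Fintype κ] (V : Ω → α) (h : α → κ) (k : κ) :
    prEq μ (fun ω => h (V ω)) k = ∑ a, if h a = k then prEq μ V a else 0 := by
  unfold prEq
  have hsplit : ∀ a : α, (if h a = k then ∑ ω, (if V ω = a then μ.p ω else 0) else 0)
      = ∑ ω, (if h a = k ∧ V ω = a then μ.p ω else 0) := by
    intro a
    by_cases hh : h a = k <;> simp [hh]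
  simp_rw [hsplit]
  rw [Finset.sum_comm]
  refine Finset.sum_congr rfl fun ω _ => ?_
  rw [Finset.sum_eq_single (V ω)]
  · simp
  · intro a _ ha
    exact if_neg (fun hh => ha hh.2.symm)
  · simp

lemma prEq_pair_comp_group [Fintype κ] (Bb : Ω → β) (V : Ω → α) (h : α → κ) (b : β) (k : κ) :
    prEq μ (fun ω => (Bb ω, h (V ω))) (b, k)
      = ∑ a, if h a = k then prEq μ (fun ω => (Bb ω, V ω)) (b, a) else 0 := by
  have hsplit : ∀ a : α, (if h a = k then prEq μ (fun ω => (Bb ω, V ω)) (b, a) else 0)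
      = ∑ ω, (if h a = k ∧ (Bb ω, V ω) = (b, a) then μ.p ω else 0) := by
    intro a
    by_cases hh : h a = k
    · rw [if_pos hh]
      unfold prEq
      refine Finset.sum_congr rfl fun ω _ => ?_
      by_cases hv : (Bb ω, V ω) = (b, a)
      · rw [if_pos hv, if_pos (⟨hh, hv⟩ : h a = k ∧ (Bb ω, V ω) = (b, a))]
      · rw [if_neg hv, if_neg (fun h' : h a = k ∧ (Bb ω, V ω) = (b, a) => hv h'.2)]
    · rw [if_neg hh]
      exact (Finset.sum_eq_zero fun ω _ => if_neg (fun h' => hh h'.1)).symm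
  simp_rw [hsplit]
  unfold prEq
  rw [Finset.sum_comm]
  refine Finset.sum_congr rfl fun ω _ => ?_
  rw [Finset.sum_eq_single (V ω)]
  · by_cases h1 : Bb ω = b <;> by_cases h2 : h (V ω) = k <;> simp [Prod.ext_iff, h1, h2]
  · intro a _ ha
    exact if_neg (fun hh => ha ((Prod.ext_iff.1 hh.2).2.symm))
  · simp

variable {γ : Type} [Fintype γ]

lemma cmi_zero_strong {A : Ω → α} {B : Ω → β} {Cc : Ω → γ}
    (h : condMutInf μ A B Cc = 0) :
    ∀ a b c, prEq μ (fun ω => (B ω, Cc ω)) (b, c) ≠ 0 →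
      prEq μ (fun ω => (A ω, B ω, Cc ω)) (a, b, c) * prEq μ Cc c
        = prEq μ (fun ω => (A ω, Cc ω)) (a, c) * prEq μ (fun ω => (B ω, Cc ω)) (b, c) := by
  intro a₀ b c hbc
  have hpt := cmi_eq_zero_pointwise μ A B Cc h
  have hCpos : 0 < prEq μ Cc c :=
    lt_of_lt_of_le (lt_of_le_of_ne (prEq_nonneg μ _ _) (Ne.symm hbc))
      (prEq_pair_le_snd μ B Cc b c)
  have hG : ∀ a, prEq μ (fun ω => (A ω, B ω, Cc ω)) (a, b, c)
      ≤ prEq μ (fun ω => (A ω, Cc ω)) (a, c) * prEq μ (fun ω => (B ω, Cc ω)) (b, c)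
        / prEq μ Cc c := by
    intro a
    by_cases hz : prEq μ (fun ω => (A ω, B ω, Cc ω)) (a, b, c) = 0
    · rw [hz]
      exact div_nonneg (mul_nonneg (prEq_nonneg μ _ _) (prEq_nonneg μ _ _)) (le_of_lt hCpos)
    · obtain ⟨ω, hp, hv⟩ := exists_of_prEq_ne_zero μ hz
      obtain ⟨hA, hB, hC⟩ : A ω = a ∧ B ω = b ∧ Cc ω = c := by
        simpa [Prod.ext_iff] using hv
      have := hpt ω hp
      rw [hA, hB, hC] at this
      apply le_of_eq
      rw [eq_div_iff (ne_of_gt hCpos)]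
      linarith
  have hsumG : ∑ a, prEq μ (fun ω => (A ω, B ω, Cc ω)) (a, b, c)
      = prEq μ (fun ω => (B ω, Cc ω)) (b, c) :=
    prEq_marg_fst μ A (fun ω => (B ω, Cc ω)) (b, c)
  have hsumF : ∑ a, prEq μ (fun ω => (A ω, Cc ω)) (a, c) *
        prEq μ (fun ω => (B ω, Cc ω)) (b, c) / prEq μ Cc c
      = prEq μ (fun ω => (B ω, Cc ω)) (b, c) := by
    rw [← Finset.sum_div, ← Finset.sum_mul, prEq_marg_fst μ A Cc c]
    rw [mul_comm, mul_div_assoc, div_self (ne_of_gt hCpos), mul_one]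
  have heq := (Finset.sum_eq_sum_iff_of_le (fun a _ => hG a)).1 (by rw [hsumG, hsumF])
  have := heq a₀ (Finset.mem_univ a₀)
  rw [this, div_mul_eq_mul_div, mul_div_assoc, div_self (ne_of_gt hCpos), mul_one]

end Part5

section Part6

variable {α β W' : Type} [Fintype α] [Fintype β] [Fintype W'] (μ : FinProb Ω)

lemma double_markov (W : Ω → W') (X : Ω → α) (Y : Ω → β)
    (h1 : condMutInf μ W Y X = 0) (h2 : condMutInf μ W X Y = 0) :
    ∃ (n : ℕ) (q : α → Fin n) (q2 : β → Fin n),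
      (∀ ω, μ.p ω ≠ 0 → q (X ω) = q2 (Y ω)) ∧
      condMutInf μ X W (fun ω => q (X ω)) = 0 := by
  classical
  set R : α → α → Prop := fun x x' => ∃ y, prEq μ (fun ω => (X ω, Y ω)) (x, y) ≠ 0 ∧
    prEq μ (fun ω => (X ω, Y ω)) (x', y) ≠ 0 with hR
  haveI : DecidableEq (Quot R) := Classical.decEq _
  haveI instF : Fintype (Quot R) := Fintype.ofSurjective (Quot.mk R) (fun q => Quot.exists_rep q)
  have hne := exists_pos_p μ
  -- pointwise consequences
  have pt1 := cmi_zero_strong μ h1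
  have pt2 := cmi_zero_strong μ h2
  have hYX : ∀ x y, prEq μ (fun ω => (Y ω, X ω)) (y, x) = prEq μ (fun ω => (X ω, Y ω)) (x, y) :=
    fun x y => prEq_congr μ (fun ω _ => by simp [Prod.ext_iff]; tauto)
  have hWYX : ∀ w x y, prEq μ (fun ω => (W ω, Y ω, X ω)) (w, y, x)
      = prEq μ (fun ω => (W ω, X ω, Y ω)) (w, x, y) :=
    fun w x y => prEq_congr μ (fun ω _ => by simp [Prod.ext_iff]; tauto)
  have edge : ∀ x y, prEq μ (fun ω => (X ω, Y ω)) (x, y) ≠ 0 → ∀ w,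
      prEq μ (fun ω => (W ω, X ω)) (w, x) * prEq μ Y y
        = prEq μ (fun ω => (W ω, Y ω)) (w, y) * prEq μ X x := by
    intro x y hxy w
    have e1 := pt1 w y x (by rw [hYX]; exact hxy)
    rw [hWYX, hYX] at e1
    have e2 := pt2 w x y hxy
    have key : (prEq μ (fun ω => (W ω, X ω)) (w, x) * prEq μ Y y
        - prEq μ (fun ω => (W ω, Y ω)) (w, y) * prEq μ X x)
        * prEq μ (fun ω => (X ω, Y ω)) (x, y) = 0 := by
      linear_combination prEq μ X x * e2 - prEq μ Y y * e1
    rcases mul_eq_zero.1 key with h' | h'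
    · linarith
    · exact absurd h' hxy
  have prop : ∀ x x', Relation.EqvGen R x x' → (x = x' ∨ (prEq μ X x ≠ 0 ∧ prEq μ X x' ≠ 0 ∧
      ∀ w, prEq μ (fun ω => (W ω, X ω)) (w, x) * prEq μ X x'
        = prEq μ (fun ω => (W ω, X ω)) (w, x') * prEq μ X x)) := by
    intro x x' h
    induction h with
    | rel a b hab =>
      obtain ⟨y, ha, hb⟩ := hab
      right
      have hXa : prEq μ X a ≠ 0 := fun hz => ha (le_antisymm
        (hz ▸ prEq_pair_le_fst μ X Y a y) (prEq_nonneg μ _ _))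
      have hXb : prEq μ X b ≠ 0 := fun hz => hb (le_antisymm
        (hz ▸ prEq_pair_le_fst μ X Y b y) (prEq_nonneg μ _ _))
      have hy : prEq μ Y y ≠ 0 := fun hz => ha (le_antisymm
        (hz ▸ prEq_pair_le_snd μ X Y a y) (prEq_nonneg μ _ _))
      refine ⟨hXa, hXb, fun w => ?_⟩
      have ea := edge a y ha w
      have eb := edge b y hb w
      have key : (prEq μ (fun ω => (W ω, X ω)) (w, a) * prEq μ X b
          - prEq μ (fun ω => (W ω, X ω)) (w, b) * prEq μ X a) * prEq μ Y y = 0 := by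
        linear_combination prEq μ X b * ea - prEq μ X a * eb
      rcases mul_eq_zero.1 key with h' | h'
      · linarith
      · exact absurd h' hy
    | refl a => left; rfl
    | symm a b h ih =>
      rcases ih with rfl | ⟨ha, hb, hw⟩
      · left; rfl
      · exact Or.inr ⟨hb, ha, fun w => (hw w).symm⟩
    | trans a b c h1' h2' ih1 ih2 =>
      rcases ih1 with rfl | ⟨ha, hb, hw1⟩
      · exact ih2
      · rcases ih2 with rfl | ⟨hb', hc, hw2⟩
        · exact Or.inr ⟨ha, hb, hw1⟩
        · refine Or.inr ⟨ha, hc, fun w => ?_⟩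
          have key : (prEq μ (fun ω => (W ω, X ω)) (w, a) * prEq μ X c
              - prEq μ (fun ω => (W ω, X ω)) (w, c) * prEq μ X a) * prEq μ X b = 0 := by
            linear_combination prEq μ X c * hw1 w + prEq μ X a * hw2 w
          rcases mul_eq_zero.1 key with h' | h'
          · linarith
          · exact absurd h' hb
  set e : Quot R ≃ Fin (Fintype.card (Quot R)) := Fintype.equivFin (Quot R) with he
  set qq : α → Fin (Fintype.card (Quot R)) := fun x => e (Quot.mk R x) with hqq
  refine ⟨Fintype.card (Quot R), qq,
    fun y => if h' : ∃ x, prEq μ (fun ω => (X ω, Y ω)) (x, y) ≠ 0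
      then qq h'.choose else qq (X hne.choose), ?_, ?_⟩
  · intro ω hp
    have hex : ∃ x, prEq μ (fun ω' => (X ω', Y ω')) (x, Y ω) ≠ 0 :=
      ⟨X ω, ne_of_gt (prEq_pos μ (fun ω' => (X ω', Y ω')) hp)⟩
    show qq (X ω) = if h' : ∃ x, prEq μ (fun ω' => (X ω', Y ω')) (x, Y ω) ≠ 0
      then qq h'.choose else qq (X hne.choose)
    rw [dif_pos hex]
    exact congrArg e (Quot.sound ⟨Y ω, ne_of_gt (prEq_pos μ (fun ω' => (X ω', Y ω')) hp),
      hex.choose_spec⟩)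
  · apply cmi_eq_zero_of_pointwise
    intro ω hp
    have r1 : prEq μ (fun ω' => (X ω', qq (X ω'))) (X ω, qq (X ω))
        = prEq μ X (X ω) :=
      prEq_congr μ (fun ω' _ => by
        constructor
        · intro h'; exact (Prod.ext_iff.1 h').1
        · intro h'
          show (X ω', qq (X ω')) = (X ω, qq (X ω))
          rw [h'])
    have r2 : prEq μ (fun ω' => (X ω', W ω', qq (X ω'))) (X ω, W ω, qq (X ω))
        = prEq μ (fun ω' => (W ω', X ω')) (W ω, X ω) :=
      prEq_congr μ (fun ω' _ => by
        simp only [Prod.ext_iff]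
        constructor
        · rintro ⟨hx, hw, -⟩; exact ⟨hw, hx⟩
        · rintro ⟨hw, hx⟩; exact ⟨hx, hw, by rw [hx]⟩)
    have r3 := prEq_pair_comp_group μ W X qq (W ω) (qq (X ω))
    have r4 := prEq_comp_group μ X qq (qq (X ω))
    show prEq μ (fun ω' => (X ω', qq (X ω'))) (X ω, qq (X ω)) *
        prEq μ (fun ω' => (W ω', qq (X ω'))) (W ω, qq (X ω))
      = prEq μ (fun ω' => (X ω', W ω', qq (X ω'))) (X ω, W ω, qq (X ω)) *
        prEq μ (fun ω' => qq (X ω')) (qq (X ω))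
    rw [r1, r2, r3, r4, Finset.mul_sum, Finset.mul_sum]
    refine Finset.sum_congr rfl fun a _ => ?_
    by_cases hq : qq a = qq (X ω)
    · rw [if_pos hq, if_pos hq]
      have := prop a (X ω) (Quot.eq.1 (e.injective hq))
      rcases this with rfl | ⟨-, -, hw⟩
      · ring
      · have := hw (W ω)
        linarith
    · rw [if_neg hq, if_neg hq, mul_zero, mul_zero]

end Part6

section Part7

variable {α α' β β' γ : Type} [Fintype α] [Fintype α'] [Fintype β] [Fintype β'] [Fintype γ]
variable (μ : FinProb Ω)

lemma ent_iso {α β : Type} [Fintype α] [Fintype β] (A : Ω → α) (B : Ω → β)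
    (f : α → β) (g : β → α) (hf : ∀ ω, B ω = f (A ω)) (hg : ∀ ω, A ω = g (B ω)) :
    ent μ A = ent μ B :=
  ent_eq_of_mutual μ A B f g (fun ω _ => hf ω) (fun ω _ => hg ω)

lemma cmi_symm (A : Ω → α) (B : Ω → β) (Cc : Ω → γ) :
    condMutInf μ A B Cc = condMutInf μ B A Cc := by
  have h1 : ent μ (fun ω => (A ω, B ω, Cc ω)) = ent μ (fun ω => (B ω, A ω, Cc ω)) :=
    ent_iso μ _ _ (fun p => (p.2.1, p.1, p.2.2)) (fun p => (p.2.1, p.1, p.2.2))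
      (fun ω => rfl) (fun ω => rfl)
  simp only [condMutInf]
  rw [h1]
  ring

lemma cmi_mono_left_snd (A : Ω → α) (A' : Ω → α') (B : Ω → β) (Cc : Ω → γ) :
    condMutInf μ A' B Cc ≤ condMutInf μ (fun ω => (A ω, A' ω)) B Cc := by
  have hP3 := cmi_nonneg μ A B (fun ω => (A' ω, Cc ω))
  have r1 : ent μ (fun ω => ((A ω, A' ω), Cc ω)) = ent μ (fun ω => (A ω, A' ω, Cc ω)) :=
    ent_iso μ _ _ (fun p => (p.1.1, p.1.2, p.2)) (fun p => ((p.1, p.2.1), p.2.2))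
      (fun ω => rfl) (fun ω => rfl)
  have r2 : ent μ (fun ω => (B ω, A' ω, Cc ω)) = ent μ (fun ω => (A' ω, B ω, Cc ω)) :=
    ent_iso μ _ _ (fun p => (p.2.1, p.1, p.2.2)) (fun p => (p.2.1, p.1, p.2.2))
      (fun ω => rfl) (fun ω => rfl)
  have r3 : ent μ (fun ω => ((A ω, A' ω), B ω, Cc ω))
      = ent μ (fun ω => (A ω, B ω, A' ω, Cc ω)) :=
    ent_iso μ _ _ (fun p => (p.1.1, p.2.1, p.1.2, p.2.2)) (fun p => ((p.1, p.2.2.1), p.2.1, p.2.2.2))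
      (fun ω => rfl) (fun ω => rfl)
  simp only [condMutInf] at hP3 ⊢
  rw [r1, r3]
  linarith [hP3, r2]

lemma cmi_mono_left_fst (A : Ω → α) (A' : Ω → α') (B : Ω → β) (Cc : Ω → γ) :
    condMutInf μ A B Cc ≤ condMutInf μ (fun ω => (A ω, A' ω)) B Cc := by
  have hswap : condMutInf μ (fun ω => (A' ω, A ω)) B Cc
      = condMutInf μ (fun ω => (A ω, A' ω)) B Cc := by
    have r1 : ent μ (fun ω => ((A' ω, A ω), Cc ω)) = ent μ (fun ω => ((A ω, A' ω), Cc ω)) :=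
      ent_iso μ _ _ (fun p => ((p.1.2, p.1.1), p.2)) (fun p => ((p.1.2, p.1.1), p.2))
        (fun ω => rfl) (fun ω => rfl)
    have r2 : ent μ (fun ω => ((A' ω, A ω), B ω, Cc ω))
        = ent μ (fun ω => ((A ω, A' ω), B ω, Cc ω)) :=
      ent_iso μ _ _ (fun p => ((p.1.2, p.1.1), p.2)) (fun p => ((p.1.2, p.1.1), p.2))
        (fun ω => rfl) (fun ω => rfl)
    simp only [condMutInf]
    rw [r1, r2]
  calc condMutInf μ A B Cc ≤ condMutInf μ (fun ω => (A' ω, A ω)) B Cc :=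
        cmi_mono_left_snd μ A' A B Cc
    _ = condMutInf μ (fun ω => (A ω, A' ω)) B Cc := hswap

lemma cmi_mono_right_fst (A : Ω → α) (B : Ω → β) (B' : Ω → β') (Cc : Ω → γ) :
    condMutInf μ A B Cc ≤ condMutInf μ A (fun ω => (B ω, B' ω)) Cc := by
  rw [cmi_symm μ A B Cc, cmi_symm μ A (fun ω => (B ω, B' ω)) Cc]
  exact cmi_mono_left_fst μ B B' A Cc

end Part7

/-- In any 3SS scheme (expressed through the information-theoretic correctness
and privacy conditions holding for every secret distribution supported on the
domain): `H(W₃₁ | W₁₂) ≥ H(X₁, X₃ | X₂) + RI(X₁; X₂)`. -/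
theorem share_condEnt_lower_bound {𝒳₁ 𝒳₂ 𝒳₃ A B C : Type}
    [Fintype 𝒳₁] [Fintype 𝒳₂] [Fintype 𝒳₃] [Fintype A] [Fintype B] [Fintype C]
    (μ : FinProb Ω)
    (X1 : Ω → 𝒳₁) (X2 : Ω → 𝒳₂) (X3 : Ω → 𝒳₃)
    (W12 : Ω → A) (W23 : Ω → B) (W31 : Ω → C)
    (hC1 : condEnt μ X1 (fun ω => (W12 ω, W31 ω)) = 0)
    (hC2 : condEnt μ X2 (fun ω => (W23 ω, W12 ω)) = 0)
    (hC3 : condEnt μ X3 (fun ω => (W31 ω, W23 ω)) = 0)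
    (hP1 : condMutInf μ (fun ω => (W12 ω, W31 ω)) (fun ω => (X2 ω, X3 ω)) X1 = 0)
    (hP2 : condMutInf μ (fun ω => (W23 ω, W12 ω)) (fun ω => (X1 ω, X3 ω)) X2 = 0)
    (hP3 : condMutInf μ (fun ω => (W31 ω, W23 ω)) (fun ω => (X1 ω, X2 ω)) X3 = 0) :
    condEnt μ W31 W12 ≥ condEnt μ (fun ω => (X1 ω, X3 ω)) X2 + resInf μ X1 X2 := by
  obtain ⟨f1, hf1⟩ := condEnt_zero_fn μ hC1
  obtain ⟨f2, hf2⟩ := condEnt_zero_fn μ hC2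
  obtain ⟨f3, hf3⟩ := condEnt_zero_fn μ hC3
  -- reduced privacy conditions
  have hP1a : condMutInf μ W12 X2 X1 = 0 := by
    have hle1 := cmi_mono_right_fst μ W12 X2 X3 X1
    have hle2 := cmi_mono_left_fst μ W12 W31 (fun ω => (X2 ω, X3 ω)) X1
    have h0 := cmi_nonneg μ W12 X2 X1
    linarith
  have hP2a : condMutInf μ W12 X1 X2 = 0 := by
    have hle1 := cmi_mono_right_fst μ W12 X1 X3 X2
    have hle2 := cmi_mono_left_snd μ W23 W12 (fun ω => (X1 ω, X3 ω)) X2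
    have h0 := cmi_nonneg μ W12 X1 X2
    linarith
  obtain ⟨n, q, q2, hq12, hdm⟩ := double_markov μ W12 X1 X2 hP1a hP2a
  -- Gács–Körner bound
  have hQent : ent μ (fun ω => q (X1 ω)) ≤ gkInf μ X1 X2 := by
    apply le_csSup
    · refine ⟨ent μ X1, ?_⟩
      rintro h ⟨n, f, g, hfg, rfl⟩
      exact ent_comp_le μ X1 f
    · exact ⟨n, q, q2, fun ω hp => hq12 ω (ne_of_gt hp), rfl⟩
  -- (c) part
  have A1 : ent μ (fun ω => (W31 ω, W23 ω, W12 ω))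
      = ent μ (fun ω => (W31 ω, (W23 ω, W12 ω), (X1 ω, X3 ω), X2 ω)) :=
    ent_eq_of_mutual μ _ _
      (fun p => (p.1, (p.2.1, p.2.2), (f1 (p.2.2, p.1), f3 (p.1, p.2.1)), f2 (p.2.1, p.2.2)))
      (fun p => (p.1, p.2.1.1, p.2.1.2))
      (fun ω hp => by simp only []; rw [hf1 ω hp, hf2 ω hp, hf3 ω hp])
      (fun ω _ => rfl)
  have A2 : ent μ (fun ω => ((W23 ω, W12 ω), (X1 ω, X3 ω), X2 ω))
      ≤ ent μ (fun ω => (W31 ω, (W23 ω, W12 ω), (X1 ω, X3 ω), X2 ω)) :=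
    pair_ge μ W31 (fun ω => ((W23 ω, W12 ω), (X1 ω, X3 ω), X2 ω))
  have A3 := hP2
  simp only [condMutInf] at A3
  have A4 : ent μ (fun ω => ((W23 ω, W12 ω), X2 ω)) = ent μ (fun ω => (W23 ω, W12 ω)) :=
    ent_eq_of_mutual μ _ _ (fun p => p.1) (fun p => (p, f2 p))
      (fun ω _ => rfl) (fun ω hp => by rw [hf2 ω hp])
  -- (d) part
  have A5a := cmi_mono_left_snd μ W31 X1 (fun ω => (W23 ω, X2 ω)) W12
  have A5b : condMutInf μ X1 X2 W12 ≤ condMutInf μ X1 (fun ω => (W23 ω, X2 ω)) W12 := by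
    rw [cmi_symm μ X1 X2 W12, cmi_symm μ X1 (fun ω => (W23 ω, X2 ω)) W12]
    exact cmi_mono_left_snd μ W23 X2 X1 W12
  simp only [condMutInf] at A5a A5b
  have A6 : ent μ (fun ω => ((W31 ω, X1 ω), W12 ω)) = ent μ (fun ω => (W31 ω, W12 ω)) :=
    ent_eq_of_mutual μ _ _ (fun p => (p.1.1, p.2)) (fun p => ((p.1, f1 (p.2, p.1)), p.2))
      (fun ω _ => rfl) (fun ω hp => by simp only []; rw [hf1 ω hp])
  have A7 : ent μ (fun ω => ((W23 ω, X2 ω), W12 ω)) = ent μ (fun ω => (W23 ω, W12 ω)) :=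
    ent_eq_of_mutual μ _ _ (fun p => (p.1.1, p.2)) (fun p => ((p.1, f2 (p.1, p.2)), p.2))
      (fun ω _ => rfl) (fun ω hp => by simp only []; rw [hf2 ω hp])
  have A8 : ent μ (fun ω => ((W31 ω, X1 ω), (W23 ω, X2 ω), W12 ω))
      = ent μ (fun ω => (W31 ω, W23 ω, W12 ω)) :=
    ent_eq_of_mutual μ _ _ (fun p => (p.1.1, p.2.1.1, p.2.2))
      (fun p => ((p.1, f1 (p.2.2, p.1)), (p.2.1, f2 (p.2.1, p.2.2)), p.2.2))
      (fun ω _ => rfl) (fun ω hp => by simp only []; rw [hf1 ω hp, hf2 ω hp])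
  -- (e)-(h) part
  have A9 : ent μ (fun ω => ((q (X1 ω), X1 ω), W12 ω)) = ent μ (fun ω => (X1 ω, W12 ω)) :=
    ent_eq_of_mutual μ _ _ (fun p => (p.1.2, p.2)) (fun p => ((q p.1, p.1), p.2))
      (fun ω _ => rfl) (fun ω _ => rfl)
  have A10 : ent μ (fun ω => ((q (X1 ω), X1 ω), X2 ω, W12 ω))
      = ent μ (fun ω => (X1 ω, X2 ω, W12 ω)) :=
    ent_eq_of_mutual μ _ _ (fun p => (p.1.2, p.2)) (fun p => ((q p.1, p.1), p.2))
      (fun ω _ => rfl) (fun ω _ => rfl)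
  have A11 := cmi_nonneg μ (fun ω => q (X1 ω)) X2 W12
  simp only [condMutInf] at A11
  have A13 : ent μ (fun ω => ((q (X1 ω), X1 ω), W12 ω))
      = ent μ (fun ω => (X1 ω, q (X1 ω), W12 ω)) :=
    ent_eq_of_mutual μ _ _ (fun p => (p.1.2, p.1.1, p.2)) (fun p => ((p.2.1, p.1), p.2.2))
      (fun ω _ => rfl) (fun ω _ => rfl)
  have A14 : ent μ (fun ω => ((q (X1 ω), X1 ω), X2 ω, W12 ω))
      = ent μ (fun ω => (X1 ω, X2 ω, q (X1 ω), W12 ω)) :=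
    ent_eq_of_mutual μ _ _ (fun p => (p.1.2, p.2.1, p.1.1, p.2.2))
      (fun p => ((p.2.2.1, p.1), p.2.1, p.2.2.2))
      (fun ω _ => rfl) (fun ω _ => rfl)
  have A15 : ent μ (fun ω => (X2 ω, q (X1 ω), W12 ω))
      = ent μ (fun ω => (q (X1 ω), X2 ω, W12 ω)) :=
    ent_eq_of_mutual μ _ _ (fun p => (p.2.1, p.1, p.2.2)) (fun p => (p.2.1, p.1, p.2.2))
      (fun ω _ => rfl) (fun ω _ => rfl)
  have A16 := cmi_nonneg μ X1 W12 (fun ω => (X2 ω, q (X1 ω)))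
  simp only [condMutInf] at A16
  have hdm' := hdm
  simp only [condMutInf] at hdm'
  have A17 : ent μ (fun ω => (X1 ω, q (X1 ω), W12 ω))
      = ent μ (fun ω => (X1 ω, W12 ω, q (X1 ω))) :=
    ent_eq_of_mutual μ _ _ (fun p => (p.1, p.2.2, p.2.1)) (fun p => (p.1, p.2.2, p.2.1))
      (fun ω _ => rfl) (fun ω _ => rfl)
  have A18 : ent μ (fun ω => (X2 ω, q (X1 ω), W12 ω))
      = ent μ (fun ω => (W12 ω, X2 ω, q (X1 ω))) :=
    ent_eq_of_mutual μ _ _ (fun p => (p.2.2, p.1, p.2.1)) (fun p => (p.2.1, p.2.2, p.1))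
      (fun ω _ => rfl) (fun ω _ => rfl)
  have A19 : ent μ (fun ω => (X1 ω, X2 ω, q (X1 ω), W12 ω))
      = ent μ (fun ω => (X1 ω, W12 ω, X2 ω, q (X1 ω))) :=
    ent_eq_of_mutual μ _ _ (fun p => (p.1, p.2.2.2, p.2.1, p.2.2.1))
      (fun p => (p.1, p.2.2.1, p.2.2.2, p.2.1))
      (fun ω _ => rfl) (fun ω _ => rfl)
  have A20 : ent μ (fun ω => (q (X1 ω), W12 ω)) = ent μ (fun ω => (W12 ω, q (X1 ω))) :=
    ent_eq_of_mutual μ _ _ (fun p => (p.2, p.1)) (fun p => (p.2, p.1))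
      (fun ω _ => rfl) (fun ω _ => rfl)
  have A21 : ent μ (fun ω => (X1 ω, q (X1 ω))) = ent μ X1 :=
    ent_eq_of_mutual μ _ _ (fun p => p.1) (fun x => (x, q x))
      (fun ω _ => rfl) (fun ω _ => rfl)
  have A22 : ent μ (fun ω => (X2 ω, q (X1 ω))) = ent μ X2 :=
    ent_eq_of_mutual μ _ _ (fun p => p.1) (fun x => (x, q2 x))
      (fun ω _ => rfl) (fun ω hp => by rw [hq12 ω hp])
  have A23 : ent μ (fun ω => (X1 ω, X2 ω, q (X1 ω))) = ent μ (fun ω => (X1 ω, X2 ω)) :=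
    ent_eq_of_mutual μ _ _ (fun p => (p.1, p.2.1)) (fun p => (p.1, p.2, q p.1))
      (fun ω _ => rfl) (fun ω _ => rfl)
  have test3 : ent μ (fun ω => (W31 ω, W23 ω, W12 ω)) - ent μ (fun ω => (W23 ω, W12 ω))
      ≥ ent μ (fun ω => ((X1 ω, X3 ω), X2 ω)) - ent μ X2 := by
    linarith [A1, A2, A3, A4]
  have test2 : ent μ (fun ω => (X1 ω, W12 ω)) + ent μ (fun ω => (X2 ω, W12 ω))
      - ent μ (fun ω => (X1 ω, X2 ω, W12 ω)) - ent μ W12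
      ≤ ent μ (fun ω => (W31 ω, W12 ω)) + ent μ (fun ω => (W23 ω, W12 ω))
      - ent μ (fun ω => (W31 ω, W23 ω, W12 ω)) - ent μ W12 := by
    linarith [A5a, A5b, A6, A7, A8]
  have test1 : ent μ (fun ω => (X1 ω, W12 ω)) + ent μ (fun ω => (X2 ω, W12 ω))
      - ent μ (fun ω => (X1 ω, X2 ω, W12 ω)) - ent μ W12
      ≥ ent μ X1 + ent μ X2 - ent μ (fun ω => (X1 ω, X2 ω)) - ent μ (fun ω => q (X1 ω)) := by
    linarith [A9, A10, A11, A13, A14, A15, A16, hdm', A17, A18, A19, A20, A21, A22, A23]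
  simp only [ge_iff_le, condEnt, resInf, mutInf]
  linarith [test1, test2, test3, hQent]
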